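/- Let M be a maximal ancestral graph (MAG). Then every graph M′ obtained from M by removing only directed edges is also a MAG. -/

import Mathlib

/-!
Common definitions: mixed graphs, walks, colliders, m-separation,
ancestral graphs, DAGs, MAGs, proper causal paths, adjustment criteria,
inducing paths, and MAG marginalization.
-/

universe u

/-- The four possible kinds of edges of a mixed graph, oriented along the
direction of traversal: `u → v`, `u ← v`, `u ↔ v`, `u − v`. -/
inductive EType where
  | right : EType
  | left : EType
  | both : EType
  | undirEdge : EType
deriving DecidableEq

namespace EType

/-- The edge has an arrowhead at its first endpoint. -/
def headFst : EType → Prop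
  | .left => True
  | .both => True
  | _ => False

/-- The edge has an arrowhead at its second endpoint. -/
def headSnd : EType → Prop
  | .right => True
  | .both => True
  | _ => False

end EType

/-- A mixed graph with directed, bidirected and undirected edges. -/
structure MixedGraph (V : Type u) where
  dir : V → V → Prop
  bi : V → V → Prop
  undir : V → V → Prop
  bi_symm : ∀ u v, bi u v → bi v u
  undir_symm : ∀ u v, undir u v → undir v u

namespace MixedGraph

variable {V : Type u}

/-- `G.IsEdge e u v` holds if the graph contains the edge `e` from `u` to `v`
(read in the direction of traversal). -/
def IsEdge (G : MixedGraph V) : EType → V → V → Prop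
  | .right, u, v => G.dir u v
  | .left, u, v => G.dir v u
  | .both, u, v => G.bi u v
  | .undirEdge, u, v => G.undir u v

/-- Walks in a mixed graph, remembering the type of every traversed edge. -/
inductive Walk (G : MixedGraph V) : V → V → Type u
  | nil (v : V) : Walk G v v
  | cons (u v w : V) (e : EType) (h : G.IsEdge e u v) (p : Walk G v w) : Walk G u w

namespace Walk

variable {G : MixedGraph V}

/-- The list of nodes visited by a walk (with multiplicity). -/
def support : {a b : V} → G.Walk a b → List V
  | _, _, .nil v => [v]
  | _, _, .cons u _ _ _ _ p => u :: p.support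

/-- A path is a walk without repeated nodes. -/
def IsPath {a b : V} (p : G.Walk a b) : Prop := p.support.Nodup

/-- Auxiliary m-connectivity check: `ph` records whether the previous edge of
the walk has an arrowhead at the current start node.  At every interior node,
the node must be a collider (two arrowheads meet) iff it belongs to `Z`. -/
def connFrom (Z : Set V) : Prop → {a b : V} → G.Walk a b → Prop
  | _, _, _, .nil _ => True
  | ph, _, _, .cons u _ _ e _ p =>
      ((ph ∧ e.headFst) ↔ u ∈ Z) ∧ p.connFrom Z e.headSnd

/-- The walk m-connects its endpoints given `Z`: all colliders and only
colliders on it are in `Z`. -/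
def ConnBy (Z : Set V) : {a b : V} → G.Walk a b → Prop
  | _, _, .nil _ => True
  | _, _, .cons _ _ _ e _ p => p.connFrom Z e.headSnd

/-- A causal (directed) walk: every edge points towards the end node. -/
def IsCausal : {a b : V} → G.Walk a b → Prop
  | _, _, .nil _ => True
  | _, _, .cons _ _ _ e _ p => e = EType.right ∧ p.IsCausal

/-- A walk is proper w.r.t. `X` if only its start node may belong to `X`. -/
def ProperFrom (X : Set V) : {a b : V} → G.Walk a b → Prop
  | _, _, .nil _ => True
  | _, _, .cons _ _ _ _ _ p => ∀ n ∈ p.support, n ∉ X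

/-- Concatenation of walks. -/
def append : {a b c : V} → G.Walk a b → G.Walk b c → G.Walk a c
  | _, _, _, .nil _, q => q
  | _, _, _, .cons u v _ e h p, q => .cons u v _ e h (p.append q)

/-- The walk is nonempty and its first edge has an arrowhead at the start
node. -/
def headAtStart : {a b : V} → G.Walk a b → Prop
  | _, _, .nil _ => False
  | _, _, .cons _ _ _ e _ _ => e.headFst

/-- The walk is nonempty and its last edge has an arrowhead at the end node. -/
def headAtEnd : {a b : V} → G.Walk a b → Prop
  | _, _, .nil _ => False
  | _, _, .cons _ _ _ e _ (.nil _) => e.headSnd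
  | _, _, .cons _ _ _ _ _ p => p.headAtEnd

/-- `P` holds of every (ordered) pair of consecutive nodes of the walk. -/
def edgeProp (P : V → V → Prop) : {a b : V} → G.Walk a b → Prop
  | _, _, .nil _ => True
  | _, _, .cons u v _ _ _ p => P u v ∧ p.edgeProp P

end Walk

/-- `x` and `y` are m-connected given `Z`: there is a walk between them on
which all colliders and only colliders are in `Z`. -/
def MConn (G : MixedGraph V) (Z : Set V) (x y : V) : Prop :=
  ∃ p : G.Walk x y, p.ConnBy Z

/-- `Z` m-separates the node sets `X` and `Y`. -/
def MSep (G : MixedGraph V) (X Y Z : Set V) : Prop :=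
  ∀ x ∈ X, ∀ y ∈ Y, ¬ G.MConn Z x y

/-- `Z` is an m-separator relative to `(X, Y)`: it is disjoint from `X ∪ Y`
and m-separates `X` and `Y`. -/
def IsMSep (G : MixedGraph V) (X Y Z : Set V) : Prop :=
  Disjoint Z (X ∪ Y) ∧ G.MSep X Y Z

/-- An `M`-minimal m-separator relative to `(X, Y)`. -/
def IsMinMSep (G : MixedGraph V) (X Y M Z : Set V) : Prop :=
  G.IsMSep X Y Z ∧ M ⊆ Z ∧ ∀ Z', Z' ⊂ Z → M ⊆ Z' → ¬ G.IsMSep X Y Z'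

/-- One step of the anterior relation: a directed or undirected edge. -/
def antEdge (G : MixedGraph V) (u v : V) : Prop := G.dir u v ∨ G.undir u v

/-- `u` is an anterior of `v` (every node is its own anterior). -/
def Anterior (G : MixedGraph V) (u v : V) : Prop :=
  Relation.ReflTransGen G.antEdge u v

/-- The set of anteriors of nodes of `W`. -/
def Ant (G : MixedGraph V) (W : Set V) : Set V := {u | ∃ w ∈ W, G.Anterior u w}

/-- `v` is a descendant of `u`, i.e. there is a directed path `u → ⋯ → v`
(every node is its own descendant/ancestor). -/
def Anc (G : MixedGraph V) (u v : V) : Prop := Relation.ReflTransGen G.dir u v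

/-- The set of descendants of nodes of `W`. -/
def De (G : MixedGraph V) (W : Set V) : Set V := {v | ∃ w ∈ W, G.Anc w v}

/-- The set of ancestors of nodes of `W`. -/
def AnSet (G : MixedGraph V) (W : Set V) : Set V := {v | ∃ w ∈ W, G.Anc v w}

/-- An ancestral graph: (1) for each edge `a ← b` or `a ↔ b`, `a` is not an
anterior of `b`; (2) for each edge `a − b` there is no edge `a ← c`, `a ↔ c`,
`b ← c` or `b ↔ c`. -/
def IsAG (G : MixedGraph V) : Prop :=
  (∀ a b, G.dir b a ∨ G.bi a b → ¬ G.Anterior a b) ∧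
  (∀ a b, G.undir a b →
    ∀ c, ¬ G.dir c a ∧ ¬ G.bi a c ∧ ¬ G.dir c b ∧ ¬ G.bi b c)

/-- A DAG: only directed edges, and no directed cycles. -/
def IsDAG (G : MixedGraph V) : Prop :=
  (∀ u v, ¬ G.bi u v) ∧ (∀ u v, ¬ G.undir u v) ∧
  (∀ v, ¬ Relation.TransGen G.dir v v)

/-- Two nodes are adjacent if they are joined by some edge. -/
def Adjacent (G : MixedGraph V) (u v : V) : Prop :=
  G.dir u v ∨ G.dir v u ∨ G.bi u v ∨ G.undir u v

/-- A maximal ancestral graph (MAG): only directed and bidirected edges, no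
directed cycle, no almost-directed cycle, and every pair of non-adjacent
nodes can be m-separated by some set of the remaining nodes. -/
def IsMAG (G : MixedGraph V) : Prop :=
  (∀ u v, ¬ G.undir u v) ∧
  (∀ v, ¬ Relation.TransGen G.dir v v) ∧
  (∀ u v, G.bi u v → ¬ Relation.TransGen G.dir v u) ∧
  (∀ u v, u ≠ v → ¬ G.Adjacent u v →
    ∃ Z : Set V, u ∉ Z ∧ v ∉ Z ∧ ¬ G.MConn Z u v)

/-- `PCP G X Y`: the set of nodes, excluding nodes of `X`, that lie on a
proper causal path from `X` to `Y`. -/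
def PCP (G : MixedGraph V) (X Y : Set V) : Set V :=
  {w | w ∉ X ∧ ∃ x ∈ X, ∃ y ∈ Y, ∃ p : G.Walk x y,
    p.IsPath ∧ p.IsCausal ∧ p.ProperFrom X ∧ w ∈ p.support}

/-- `Dpcp G X Y`: the descendants of nodes on proper causal paths. -/
def Dpcp (G : MixedGraph V) (X Y : Set V) : Set V := G.De (G.PCP X Y)

/-- Remove from `G` all edges into `A` and all edges out of `B`. -/
def rmInOut (G : MixedGraph V) (A B : Set V) : MixedGraph V where
  dir u v := G.dir u v ∧ v ∉ A ∧ u ∉ B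
  bi u v := G.bi u v ∧ u ∉ A ∧ v ∉ A
  undir u v := G.undir u v ∧ u ∉ B ∧ v ∉ B
  bi_symm := fun u v h => ⟨G.bi_symm u v h.1, h.2.2, h.2.1⟩
  undir_symm := fun u v h => ⟨G.undir_symm u v h.1, h.2.2, h.2.1⟩

/-- The parametrized proper back-door graph: remove every edge `x → d` with
`x ∈ X` and `d ∈ PCP(X,Y) ∪ C`. -/
def pbdC (G : MixedGraph V) (X Y C : Set V) : MixedGraph V where
  dir u v := G.dir u v ∧ ¬(u ∈ X ∧ v ∈ G.PCP X Y ∪ C)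
  bi := G.bi
  undir := G.undir
  bi_symm := G.bi_symm
  undir_symm := G.undir_symm

/-- The proper back-door graph. -/
def pbd (G : MixedGraph V) (X Y : Set V) : MixedGraph V := G.pbdC X Y ∅

/-- The adjustment criterion (AC) in a DAG: (a) no element of `Z` is a
descendant in `G_{X̄}` of a node outside `X` lying on a proper causal path
from `X` to `Y`; (b) every proper non-causal path from `X` to `Y` is blocked
by `Z`. -/
def SatisfiesACdag (G : MixedGraph V) (X Y Z : Set V) : Prop :=
  (∀ z ∈ Z, z ∉ (G.rmInOut X ∅).De (G.PCP X Y)) ∧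
  (∀ x ∈ X, ∀ y ∈ Y, ∀ p : G.Walk x y,
    p.IsPath → p.ProperFrom X → ¬ p.IsCausal → ¬ p.ConnBy Z)

/-- The adjustment criterion (AC) in a MAG: (a) no element of `Z` is a
descendant in `M` of a node outside `X` lying on a proper causal path from
`X` to `Y`; (b) every proper non-causal path from `X` to `Y` is blocked by
`Z`. -/
def SatisfiesACmag (G : MixedGraph V) (X Y Z : Set V) : Prop :=
  (∀ z ∈ Z, z ∉ G.Dpcp X Y) ∧
  (∀ x ∈ X, ∀ y ∈ Y, ∀ p : G.Walk x y,
    p.IsPath → p.ProperFrom X → ¬ p.IsCausal → ¬ p.ConnBy Z)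

/-- The constructive back-door criterion (CBC): (a) `Z` avoids
`Dpcp(X,Y)`; (b) `Z` m-separates `X` and `Y` in the proper back-door
graph. -/
def SatisfiesCBC (G : MixedGraph V) (X Y Z : Set V) : Prop :=
  (∀ z ∈ Z, z ∉ G.Dpcp X Y) ∧ (G.pbd X Y).MSep X Y Z

/-- The parametrized constructive back-door criterion CBC(A,B,C). -/
def SatisfiesCBCP (G : MixedGraph V) (X Y Z A B C : Set V) : Prop :=
  (∀ z ∈ Z, z ∉ (G.rmInOut A B).De (G.PCP X Y)) ∧ (G.pbdC X Y C).MSep X Y Z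

namespace Walk

variable {G : MixedGraph V}

/-- Auxiliary check for inducing paths: every interior non-collider is in
`L`, and every interior collider is an ancestor of a node of `T`.  `ph`
records whether the previous edge has an arrowhead at the current node. -/
def indFrom (L T : Set V) : Prop → {a b : V} → G.Walk a b → Prop
  | _, _, _, .nil _ => True
  | ph, _, _, .cons u _ _ e _ p =>
      ((ph ∧ e.headFst) → ∃ t ∈ T, Relation.ReflTransGen G.dir u t) ∧
      (¬(ph ∧ e.headFst) → u ∈ L) ∧ p.indFrom L T e.headSnd

/-- Interior conditions for inducing paths (endpoints are exempt). -/
def indBody (L T : Set V) : {a b : V} → G.Walk a b → Prop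
  | _, _, .nil _ => True
  | _, _, .cons _ _ _ e _ p => p.indFrom L T e.headSnd

end Walk

/-- `p` is an inducing path with respect to `Z` and `L`: a path on which
every non-collider other than the endpoints is in `L` and every collider is
an ancestor of the endpoints or of `Z`. -/
def IsInducing (G : MixedGraph V) (Z L : Set V) {a b : V} (p : G.Walk a b) : Prop :=
  p.IsPath ∧ p.indBody L ({a, b} ∪ Z)

/-- Adjacency in the MAG `G[∅_L`: `u, v ∉ L` are adjacent iff they cannot be
d-separated in `G` by any set `W ⊆ V∖L` (not containing `u, v`). -/
def magAdj (G : MixedGraph V) (L : Set V) (u v : V) : Prop :=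
  u ∉ L ∧ v ∉ L ∧ u ≠ v ∧
  ∀ W : Set V, Disjoint W L → u ∉ W → v ∉ W → (G.MConn W u v ∧ G.MConn W v u)

/-- The MAG `G[∅_L` obtained from the DAG `G` by marginalizing `L`: adjacent
`u, v` are joined by `u → v` if `u` is an ancestor of `v` in `G` and `v` is
not an ancestor of `u`, and by `u ↔ v` if neither is an ancestor of the
other. -/
def mag (G : MixedGraph V) (L : Set V) : MixedGraph V where
  dir u v := G.magAdj L u v ∧ G.Anc u v ∧ ¬ G.Anc v u
  bi u v := G.magAdj L u v ∧ ¬ G.Anc u v ∧ ¬ G.Anc v u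
  undir _ _ := False
  bi_symm := fun u v h =>
    ⟨⟨h.1.2.1, h.1.1, h.1.2.2.1.symm,
      fun W hW hv hu => ⟨(h.1.2.2.2 W hW hu hv).2, (h.1.2.2.2 W hW hu hv).1⟩⟩,
      h.2.2, h.2.1⟩
  undir_symm := fun _ _ h => h.elim

/-- An inducing `Z`-trail in the MAG `G[∅_L`: a path whose interior nodes are
exactly the `Z`-nodes on it, each consecutive pair being linked in `G` by an
inducing path w.r.t. `∅, L` which has arrowheads at the interior nodes. -/
def IsInducingZTrail (G : MixedGraph V) (Z L : Set V) {a b : V}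
    (p : (G.mag L).Walk a b) : Prop :=
  p.IsPath ∧ a ∉ Z ∧ b ∉ Z ∧
  (∀ v ∈ p.support, v ≠ a → v ≠ b → v ∈ Z) ∧
  p.edgeProp (fun u v => ∃ q : G.Walk u v, G.IsInducing ∅ L q ∧
    (u ∈ Z → q.headAtStart) ∧ (v ∈ Z → q.headAtEnd))

end MixedGraph

open MixedGraph

variable {V : Type u}


section Aux

open Relation

def EType.flip : EType → EType
  | .right => .left
  | .left => .right
  | .both => .both
  | .undirEdge => .undirEdge

theorem EType.flip_headFst (e : EType) : e.flip.headFst = e.headSnd := by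
  cases e <;> rfl

theorem EType.flip_headSnd (e : EType) : e.flip.headSnd = e.headFst := by
  cases e <;> rfl

namespace MixedGraph

variable {G : MixedGraph V}

theorem isEdge_flip {e : EType} {u v : V} (h : G.IsEdge e u v) :
    G.IsEdge e.flip v u := by
  cases e with
  | right => exact h
  | left => exact h
  | both => exact G.bi_symm _ _ h
  | undirEdge => exact G.undir_symm _ _ h

namespace Walk

/-- Reversal of a walk. -/
def reverse : {a b : V} → G.Walk a b → G.Walk b a
  | _, _, .nil v => .nil v
  | _, _, .cons u v _ e h p =>
      p.reverse.append (.cons v u u e.flip (isEdge_flip h) (.nil u))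

/-- The "arrowhead at the end" flag of a walk, with default `ph` for the
empty walk. -/
def endHead (ph : Prop) : {a b : V} → G.Walk a b → Prop
  | _, _, .nil _ => ph
  | _, _, .cons _ _ _ e _ p => p.endHead e.headSnd

theorem connFrom_weaken {Z : Set V} :
    ∀ {a b : V} (w : G.Walk a b) {ph : Prop}, w.connFrom Z ph → w.ConnBy Z
  | _, _, .nil _, _, _ => trivial
  | _, _, .cons _ _ _ _ _ _, _, h => h.2

theorem connFrom_append {Z : Set V} :
    ∀ {a b c : V} (X : G.Walk a b) (Y : G.Walk b c) (ph : Prop),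
      X.connFrom Z ph → Y.connFrom Z (X.endHead ph) →
      (X.append Y).connFrom Z ph
  | _, _, _, .nil _, _, _, _, hY => hY
  | _, _, _, .cons _ _ _ e _ P, Y, _, hX, hY =>
      ⟨hX.1, connFrom_append P Y e.headSnd hX.2 hY⟩

theorem endHead_append :
    ∀ {a b c : V} (X : G.Walk a b) (Y : G.Walk b c) (ph : Prop),
      (X.append Y).endHead ph = Y.endHead (X.endHead ph)
  | _, _, _, .nil _, _, _ => rfl
  | _, _, _, .cons _ _ _ e _ P, Y, _ => endHead_append P Y e.headSnd

theorem connBy_append {Z : Set V} :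
    ∀ {a b c : V} (X : G.Walk a b) (Y : G.Walk b c) (ph : Prop),
      X.ConnBy Z → Y.connFrom Z (X.endHead ph) → (X.append Y).ConnBy Z
  | _, _, _, .nil _, Y, _, _, hY => connFrom_weaken Y hY
  | _, _, _, .cons _ _ _ e _ P, Y, _, hX, hY =>
      connFrom_append P Y e.headSnd hX hY

theorem connBy_rev_core {Z : Set V} :
    ∀ {c b : V} (p : G.Walk c b) {a : V} (e : EType) (h : G.IsEdge e a c),
      p.connFrom Z e.headSnd →
      ((p.reverse).append (.cons c a a e.flip (isEdge_flip h) (.nil a))).ConnBy Z := by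
  intro c b p
  induction p with
  | nil v =>
      intro a e h _
      exact trivial
  | cons c d b' e₂ h₂ q ih =>
      intro a e h hp
      have h1 : ((q.reverse).append
          (.cons d c c e₂.flip (isEdge_flip h₂) (.nil c))).ConnBy Z :=
        ih e₂ h₂ hp.2
      have h2 : (Walk.cons c a a e.flip (isEdge_flip h) (.nil a)).connFrom Z
          (((q.reverse).append
            (.cons d c c e₂.flip (isEdge_flip h₂) (.nil c))).endHead False) := by
        rw [endHead_append]
        show ((e₂.flip.headSnd ∧ e.flip.headFst) ↔ c ∈ Z) ∧ True
        rw [EType.flip_headSnd, EType.flip_headFst]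
        exact ⟨(and_comm).trans hp.1, trivial⟩
      exact connBy_append _ _ False h1 h2

theorem connBy_reverse {Z : Set V} :
    ∀ {a b : V} (w : G.Walk a b), w.ConnBy Z → w.reverse.ConnBy Z
  | _, _, .nil _, _ => trivial
  | _, _, .cons _ _ _ e h p, hw => connBy_rev_core p e h hw

end Walk

/-- Transporting a walk along an edge-inclusion of graphs. -/
def Walk.map2 {G G' : MixedGraph V} (hd : ∀ u v, G'.dir u v → G.dir u v)
    (hb : ∀ u v, G'.bi u v → G.bi u v) (hu : ∀ u v, G'.undir u v → G.undir u v) :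
    ∀ {a b : V}, G'.Walk a b → G.Walk a b
  | _, _, .nil v => .nil v
  | _, _, .cons u v w e h p =>
      .cons u v w e
        (by cases e with
          | right => exact hd _ _ h
          | left => exact hd _ _ h
          | both => exact hb _ _ h
          | undirEdge => exact hu _ _ h)
        (Walk.map2 hd hb hu p)

theorem Walk.connFrom_map2 {G G' : MixedGraph V} {Z : Set V}
    (hd : ∀ u v, G'.dir u v → G.dir u v)
    (hb : ∀ u v, G'.bi u v → G.bi u v) (hu : ∀ u v, G'.undir u v → G.undir u v) :
    ∀ {a b : V} (w : G'.Walk a b) (ph : Prop), w.connFrom Z ph →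
      (w.map2 hd hb hu).connFrom Z ph
  | _, _, .nil _, _, _ => trivial
  | _, _, .cons _ _ _ e _ p, _, h =>
      ⟨h.1, Walk.connFrom_map2 hd hb hu p e.headSnd h.2⟩

theorem Walk.connBy_map2 {G G' : MixedGraph V} {Z : Set V}
    (hd : ∀ u v, G'.dir u v → G.dir u v)
    (hb : ∀ u v, G'.bi u v → G.bi u v) (hu : ∀ u v, G'.undir u v → G.undir u v) :
    ∀ {a b : V} (w : G'.Walk a b), w.ConnBy Z → (w.map2 hd hb hu).ConnBy Z
  | _, _, .nil _, _ => trivial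
  | _, _, .cons _ _ _ e _ p, h => Walk.connFrom_map2 hd hb hu p e.headSnd h

/-- Chasing a directed tail along a connecting walk: the start node is an
anterior of a `Z`-node or of the end node. -/
theorem chase {G' : MixedGraph V} {Z T : Set V} {y : V}
    (hZT : ∀ c, c ∈ Z → c ∈ T) (hTy : y ∈ T)
    (hclose : ∀ a b, G'.dir a b → b ∈ T → a ∈ T)
    (hnoundir : ∀ u v, ¬ G'.undir u v) :
    ∀ {a b : V} (w : G'.Walk a b) (ph : Prop), ph → w.connFrom Z ph →
      b = y → a ∈ T := by
  intro a b w
  induction w with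
  | nil v => intro ph _ _ hv; exact hv ▸ hTy
  | cons u v w' e h p ih =>
      intro ph hph hconn hby
      by_cases huZ : u ∈ Z
      · exact hZT _ huZ
      · have hnf : ¬ e.headFst := fun hf => huZ (hconn.1.mp ⟨hph, hf⟩)
        cases e with
        | left => exact absurd trivial hnf
        | both => exact absurd trivial hnf
        | undirEdge => exact absurd h (hnoundir _ _)
        | right =>
            exact hclose u v h (ih _ trivial hconn.2 hby)

/-- The main loop: no connecting walk from `x` to `y` can exist. -/
theorem loop {G' : MixedGraph V} {Z T : Set V} {x y : V}
    (hxy : x ≠ y)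
    (hnadj : ¬ G'.Adjacent x y)
    (hZdef : ∀ c, c ∈ Z ↔ c ∈ T ∧ c ≠ x ∧ c ≠ y)
    (hTx : ∀ c, G'.dir c x → c ∈ T)
    (hclose : ∀ a b, G'.dir a b → b ∈ T → a ∈ T)
    (hTy : y ∈ T)
    (hnoundir : ∀ u v, ¬ G'.undir u v)
    (hnoloopx : ¬ G'.dir x x)
    (F1 : ∀ c, (G'.dir x c ∨ G'.bi x c) → c ∈ T → c ≠ x → False) :
    ∀ {a b : V} (w : G'.Walk a b), w.ConnBy Z → a = x → b = y → False := by
  have hZT : ∀ c, c ∈ Z → c ∈ T := fun c hc => ((hZdef c).mp hc).1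
  intro a b w
  induction w with
  | nil v => intro _ hax hby; exact hxy (hax ▸ hby)
  | cons u c w' e h p ih =>
      intro hcb hax hby
      rw [hax] at h
      cases p with
      | nil v =>
          -- single edge between x and y
          rw [hby] at h
          apply hnadj
          cases e with
          | right => exact Or.inl h
          | left => exact Or.inr (Or.inl h)
          | both => exact Or.inr (Or.inr (Or.inl h))
          | undirEdge => exact Or.inr (Or.inr (Or.inr h))
      | cons c d w'' e₂ h₂ q =>
          -- hcb : ((e.headSnd ∧ e₂.headFst) ↔ c ∈ Z) ∧ q.connFrom Z e₂.headSnd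
          by_cases hcZ : c ∈ Z
          · obtain ⟨hcT, hcx, _⟩ := (hZdef c).mp hcZ
            have hs := (hcb.1.mpr hcZ).1
            have hedge : G'.dir x c ∨ G'.bi x c := by
              cases e with
              | right => exact Or.inl h
              | both => exact Or.inr h
              | left => exact absurd hs not_false
              | undirEdge => exact absurd hs not_false
            exact F1 c hedge hcT hcx
          · have hns : ¬ (e.headSnd ∧ e₂.headFst) := fun hh => hcZ (hcb.1.mp hh)
            have hcase2 : e.headSnd → False := by
              intro hs
              have hedge : G'.dir x c ∨ G'.bi x c := by
                cases e with
                | right => exact Or.inl h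
                | both => exact Or.inr h
                | left => exact absurd hs not_false
                | undirEdge => exact absurd hs not_false
              have hnf2 : ¬ e₂.headFst := fun hf => hns ⟨hs, hf⟩
              cases e₂ with
              | left => exact hnf2 trivial
              | both => exact hnf2 trivial
              | undirEdge => exact hnoundir _ _ h₂
              | right =>
                  have hdT : d ∈ T :=
                    chase hZT hTy hclose hnoundir q _ trivial hcb.2 hby
                  have hcT : c ∈ T := hclose c d h₂ hdT
                  by_cases hcx : c = x
                  · exact ih hcb.2 hcx hby
                  · exact F1 c hedge hcT hcx
            cases e with
            | right => exact hcase2 trivial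
            | both => exact hcase2 trivial
            | undirEdge => exact hnoundir _ _ h
            | left =>
                -- h : G'.dir c x
                have hcT : c ∈ T := hTx c h
                by_cases hcx : c = x
                · exact hnoloopx (hcx ▸ h)
                · by_cases hcy : c = y
                  · exact hnadj (Or.inr (Or.inl (hcy ▸ h)))
                  · exact hcZ ((hZdef c).mpr ⟨hcT, hcx, hcy⟩)

/-- Key lemma: if `y → x` in the MAG `G` and `x, y` are nonadjacent in the
subgraph `G'`, then `x` and `y` are m-separated in `G'`. -/
theorem pkg {G G' : MixedGraph V} (hMAG : G.IsMAG)
    (hdir : ∀ u v, G'.dir u v → G.dir u v)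
    (hbi : ∀ u v, G'.bi u v ↔ G.bi u v)
    (hundir : ∀ u v, G'.undir u v ↔ G.undir u v)
    {x y : V} (hxy : x ≠ y) (hnadj : ¬ G'.Adjacent x y) (hyx : G.dir y x) :
    ∃ Z : Set V, x ∉ Z ∧ y ∉ Z ∧ ∀ w : G'.Walk x y, ¬ w.ConnBy Z := by
  classical
  set T : Set V :=
    {c | Relation.ReflTransGen G'.dir c x ∨ Relation.ReflTransGen G'.dir c y} with hT
  refine ⟨{c | c ∈ T ∧ c ≠ x ∧ c ≠ y}, fun h => h.2.1 rfl, fun h => h.2.2 rfl, ?_⟩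
  intro w hw
  have hnoundir : ∀ u v, ¬ G'.undir u v := fun u v h =>
    hMAG.1 u v ((hundir u v).mp h)
  have hnoloopx : ¬ G'.dir x x := fun h =>
    hMAG.2.1 x (Relation.TransGen.single (hdir _ _ h))
  have F1 : ∀ c, (G'.dir x c ∨ G'.bi x c) → c ∈ T → c ≠ x → False := by
    intro c hedge hcT hcx
    have hc : Relation.TransGen G.dir c x := by
      rcases hcT with h | h
      · rcases h.cases_head with h' | ⟨d, hcd, hdx⟩
        · exact absurd h' hcx
        · exact Relation.TransGen.head' (hdir _ _ hcd)
            (Relation.ReflTransGen.mono hdir _ _ hdx)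
      · exact Relation.TransGen.tail' (Relation.ReflTransGen.mono hdir _ _ h) hyx
    rcases hedge with h | h
    · exact hMAG.2.1 x (Relation.TransGen.head (hdir _ _ h) hc)
    · exact hMAG.2.2.1 x c ((hbi x c).mp h) hc
  exact loop hxy hnadj (fun c => Iff.rfl)
    (fun c h => Or.inl (Relation.ReflTransGen.single h))
    (fun a b h hb => hb.imp (Relation.ReflTransGen.head h)
      (Relation.ReflTransGen.head h))
    (Or.inr Relation.ReflTransGen.refl)
    hnoundir hnoloopx F1 w hw rfl rfl

theorem adj_symm {G : MixedGraph V} {u v : V} (h : G.Adjacent u v) :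
    G.Adjacent v u := by
  rcases h with h | h | h | h
  · exact Or.inr (Or.inl h)
  · exact Or.inl h
  · exact Or.inr (Or.inr (Or.inl (G.bi_symm _ _ h)))
  · exact Or.inr (Or.inr (Or.inr (G.undir_symm _ _ h)))

end MixedGraph

end Aux


theorem statement_12 (G G' : MixedGraph V) (hMAG : G.IsMAG)
    (hdir : ∀ u v, G'.dir u v → G.dir u v)
    (hbi : ∀ u v, G'.bi u v ↔ G.bi u v)
    (hundir : ∀ u v, G'.undir u v ↔ G.undir u v) :
    G'.IsMAG := by
  classical
  refine ⟨?_, ?_, ?_, ?_⟩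
  · exact fun u v h => hMAG.1 u v ((hundir u v).mp h)
  · exact fun v h => hMAG.2.1 v (Relation.TransGen.mono hdir _ _ h)
  · exact fun u v hb h => hMAG.2.2.1 u v ((hbi u v).mp hb) (Relation.TransGen.mono hdir _ _ h)
  · intro u v huv hnadj
    by_cases hadj : G.Adjacent u v
    · rcases hadj with h | h | h | h
      · obtain ⟨Z, hvZ, huZ, hno⟩ :=
          MixedGraph.pkg hMAG hdir hbi hundir (Ne.symm huv)
            (fun hA => hnadj (MixedGraph.adj_symm hA)) h
        exact ⟨Z, huZ, hvZ, fun ⟨w, hw⟩ =>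
          hno w.reverse (MixedGraph.Walk.connBy_reverse w hw)⟩
      · obtain ⟨Z, huZ, hvZ, hno⟩ := MixedGraph.pkg hMAG hdir hbi hundir huv hnadj h
        exact ⟨Z, huZ, hvZ, fun ⟨w, hw⟩ => hno w hw⟩
      · exact absurd (Or.inr (Or.inr (Or.inl ((hbi u v).mpr h)))) hnadj
      · exact absurd (Or.inr (Or.inr (Or.inr ((hundir u v).mpr h)))) hnadj
    · obtain ⟨Z, hu, hv, hsep⟩ := hMAG.2.2.2 u v huv hadj
      exact ⟨Z, hu, hv, fun ⟨w, hw⟩ => hsep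
        ⟨w.map2 hdir (fun a b => (hbi a b).mp) (fun a b => (hundir a b).mp),
         Walk.connBy_map2 _ _ _ w hw⟩⟩
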